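/- For every integer n ≥ 0 and every pivoting-equivalence class s̄ of complete binary trees with 2n+1 vertices, the integer (n+1)·T(s̄) is divisible by 2^{2n}. -/

import Mathlib

/-- Binary trees: every vertex has an ordered pair of (possibly empty) subtrees.
`nil` is the empty tree; vertices are the `node` constructors. -/
inductive BTree : Type
  | nil : BTree
  | node : BTree → BTree → BTree
deriving DecidableEq

/-- The number of vertices of a binary tree. -/
def BTree.size : BTree → ℕ
  | .nil => 0
  | .node l r => 1 + l.size + r.size

/-- The product of the hook lengths of all vertices of a binary tree, where the
hook length of a vertex is the number of its descendants (including itself). -/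
def BTree.hookProd : BTree → ℕ
  | .nil => 1
  | .node l r => (BTree.node l r).size * l.hookProd * r.hookProd

/-- A binary tree is complete if for every vertex the two subtrees are either
both empty or both nonempty. -/
inductive BTree.Complete : BTree → Prop
  | nil : BTree.Complete .nil
  | leaf : BTree.Complete (.node .nil .nil)
  | node {l r : BTree} : l ≠ .nil → r ≠ .nil → l.Complete → r.Complete →
      BTree.Complete (.node l r)

/-- A basic pivoting: the exchange of the two subtrees of a non-leaf vertex. -/
inductive BTree.Pivot : BTree → BTree → Prop
  | swap {l r : BTree} : l ≠ .nil → r ≠ .nil → BTree.Pivot (.node l r) (.node r l)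
  | left {l l' : BTree} (r : BTree) : BTree.Pivot l l' →
      BTree.Pivot (.node l r) (.node l' r)
  | right (l : BTree) {r r' : BTree} : BTree.Pivot r r' →
      BTree.Pivot (.node l r) (.node l r')

/-- Two binary trees are pivoting-equivalent if one is obtained from the other by a
finite sequence of basic pivotings. -/
def BTree.PivotEquiv : BTree → BTree → Prop := Relation.ReflTransGen BTree.Pivot

/-- Labelled binary trees: every vertex carries a natural number label. -/
inductive LBTree : Type
  | nil : LBTree
  | node : ℕ → LBTree → LBTree → LBTree

/-- The underlying (unlabelled) shape of a labelled binary tree. -/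
def LBTree.shape : LBTree → BTree
  | .nil => .nil
  | .node _ l r => .node l.shape r.shape

/-- The multiset of labels of a labelled binary tree. -/
def LBTree.labels : LBTree → Multiset ℕ
  | .nil => 0
  | .node a l r => a ::ₘ (l.labels + r.labels)

/-- A labelled binary tree is increasing if the label of each vertex is smaller
than the labels of all its descendants. -/
inductive LBTree.Increasing : LBTree → Prop
  | nil : LBTree.Increasing .nil
  | node {a : ℕ} {l r : LBTree} :
      (∀ b ∈ l.labels, a < b) → (∀ b ∈ r.labels, a < b) →
      l.Increasing → r.Increasing → LBTree.Increasing (.node a l r)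

/-- `lcount s` is the number of increasing labellings of the binary tree `s`
by the labels `{1, …, size s}`. -/
noncomputable def lcount (s : BTree) : ℕ :=
  {l : LBTree | l.shape = s ∧
      l.labels = Multiset.map (· + 1) (Multiset.range s.size) ∧
      l.Increasing}.ncard

/-- `Tbar s` is the total number of increasing labelled binary trees whose shape is
pivoting-equivalent to `s`, i.e. `T(s̄) = ∑_{s' ∈ s̄} #L(s')`. -/
noncomputable def Tbar (s : BTree) : ℕ :=
  ∑ᶠ s' ∈ {s' | BTree.PivotEquiv s s'}, lcount s'

/-!
Splitting off the root, which must carry the least label, gives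
`#L(node l r) = C(|l|+|r|, |l|) · #L(l) · #L(r)`. For nonempty `l, r` the class of `node l r`
consists of the trees `node x y` and `node y x` with `x ∈ l̄`, `y ∈ r̄`; these two families
coincide if `l ~ r` and are disjoint otherwise, so `T(node l r) = c · C(p+q, p) · T(l̄) · T(r̄)`
with `p = |l|`, `q = |r|` and `c ∈ {1, 2}`.

We show `2^|s| ∣ (|s|+1) · T(s̄)` for complete `s` by induction. With `N = p + q + 1`, the
identity `(p+1)(q+1) C(p+q+2, p+1) = N (N+1) C(p+q, p)` rewrites `N (N+1) T` as
`c · C(p+q+2, p+1) · (p+1) T(l̄) · (q+1) T(r̄)`, and `c · C(p+q+2, p+1)` is even (for `c = 1`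
it is the central binomial coefficient `C(2p+2, p+1)`). Since `N` is odd it can be cancelled.
-/

theorem Nat.add_one_mul_add_one_mul_choose (p q : ℕ) :
    (p + 1) * (q + 1) * (p + q + 2).choose (p + 1) =
      (p + q + 1) * (p + q + 2) * (p + q).choose p := by
  have h₁ : (p + q + 2) * (p + q + 1).choose p = (p + q + 2).choose (p + 1) * (p + 1) :=
    Nat.add_one_mul_choose_eq (p + q + 1) p
  have h₂ : (p + q).choose p * (p + q + 1) = (p + q + 1).choose p * (q + 1) := by
    rw [Nat.choose_mul_succ_eq, show p + q + 1 - p = q + 1 by omega]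
  calc (p + 1) * (q + 1) * (p + q + 2).choose (p + 1)
      = (q + 1) * ((p + q + 2).choose (p + 1) * (p + 1)) := by ring
    _ = (p + q + 2) * ((p + q + 1).choose p * (q + 1)) := by rw [← h₁]; ring
    _ = (p + q + 1) * (p + q + 2) * (p + q).choose p := by rw [← h₂]; ring

theorem finsum_mem_image2 {α β γ M : Type*} [AddCommMonoid M] {f : α → β → γ}
    (hf : Function.Injective2 f) {X : Set α} {Y : Set β} (hX : X.Finite) (hY : Y.Finite)
    (g : γ → M) : ∑ᶠ t ∈ Set.image2 f X Y, g t = ∑ᶠ x ∈ X, ∑ᶠ y ∈ Y, g (f x y) := by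
  classical
  obtain ⟨X, rfl⟩ := hX.exists_finset_coe
  obtain ⟨Y, rfl⟩ := hY.exists_finset_coe
  simp only [← Finset.coe_image₂, finsum_mem_coe_finset]
  rw [← Finset.image_uncurry_product, Finset.sum_image hf.uncurry.injOn,
    Finset.sum_product]
  rfl

theorem LBTree.card_labels (t : LBTree) : Multiset.card t.labels = t.shape.size := by
  induction t with
  | nil => rfl
  | node a l r ihl ihr => simp only [labels, shape, BTree.size, Multiset.card_cons,
      Multiset.card_add, ihl, ihr]; omega

theorem LBTree.Increasing.root_eq_min' {a : ℕ} {x y : LBTree} {A : Finset ℕ}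
    (h : (LBTree.node a x y).Increasing) (hlab : (LBTree.node a x y).labels = A.val) :
    ∃ hne : A.Nonempty, A.min' hne = a ∧ (A.erase a).val = x.labels + y.labels := by
  have haA : a ∈ A := by rw [Finset.mem_def, ← hlab]; exact Multiset.mem_cons_self _ _
  refine ⟨⟨a, haA⟩, (A.min'_eq_iff _ a).mpr ⟨haA, fun b hb => ?_⟩, ?_⟩
  · cases h with
    | node hax hay _ _ =>
      rw [Finset.mem_def, ← hlab, labels, Multiset.mem_cons, Multiset.mem_add] at hb
      rcases hb with rfl | hb | hb
      exacts [le_rfl, (hax b hb).le, (hay b hb).le]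
  · rw [Finset.erase_val, ← hlab, labels, Multiset.erase_cons_head]

namespace BTree

theorem Pivot.symm {s t : BTree} (h : s.Pivot t) : t.Pivot s := by
  induction h with
  | swap hl hr => exact .swap hr hl
  | left r _ ih => exact .left r ih
  | right l _ ih => exact .right l ih

theorem Pivot.size_eq {s t : BTree} (h : s.Pivot t) : s.size = t.size := by
  induction h <;> simp only [size] <;> omega

theorem PivotEquiv.symm {s t : BTree} (h : s.PivotEquiv t) : t.PivotEquiv s := by
  induction h with
  | refl => exact .refl
  | tail _ hp ih => exact .head hp.symm ih

theorem PivotEquiv.trans {s t u : BTree} (h : s.PivotEquiv t) (h' : t.PivotEquiv u) :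
    s.PivotEquiv u :=
  Relation.ReflTransGen.trans h h'

theorem PivotEquiv.size_eq {s t : BTree} (h : s.PivotEquiv t) : s.size = t.size := by
  induction h with
  | refl => rfl
  | tail _ hp ih => exact ih.trans hp.size_eq

theorem PivotEquiv.eq_nil {t : BTree} (h : nil.PivotEquiv t) : t = nil := by
  induction h with
  | refl => rfl
  | tail _ hp ih => subst ih; cases hp

theorem PivotEquiv.ne_nil {s t : BTree} (h : s.PivotEquiv t) (hs : s ≠ nil) : t ≠ nil := by
  rintro rfl
  exact hs h.symm.eq_nil

theorem PivotEquiv.node {l l' r r' : BTree} (hl : l.PivotEquiv l') (hr : r.PivotEquiv r') :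
    (node l r).PivotEquiv (node l' r') :=
  (Relation.ReflTransGen.lift (BTree.node · r) (fun _ _ => Pivot.left r) _ _ hl).trans
    (Relation.ReflTransGen.lift (BTree.node l' ·) (fun _ _ => Pivot.right l') _ _ hr)

def pivotClass (s : BTree) : Set BTree := {t | s.PivotEquiv t}

theorem pivotClass_eq {s t : BTree} (h : s.PivotEquiv t) : t.pivotClass = s.pivotClass :=
  Set.ext fun _ => ⟨h.trans, h.symm.trans⟩

theorem pivotClass_nil : nil.pivotClass = {nil} :=
  Set.ext fun _ => ⟨PivotEquiv.eq_nil, fun h => h ▸ .refl⟩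

theorem pivotClass_node_subset (l r : BTree) :
    (node l r).pivotClass ⊆
      Set.image2 node l.pivotClass r.pivotClass ∪ Set.image2 node r.pivotClass l.pivotClass := by
  intro t ht
  induction ht with
  | refl => exact .inl ⟨l, .refl, r, .refl, rfl⟩
  | tail _ hp ih =>
    rcases ih with ⟨x, hx, y, hy, rfl⟩ | ⟨x, hx, y, hy, rfl⟩
    · cases hp with
      | swap => exact .inr ⟨y, hy, x, hx, rfl⟩
      | left _ hp => exact .inl ⟨_, hx.tail hp, y, hy, rfl⟩
      | right _ hp => exact .inl ⟨x, hx, _, hy.tail hp, rfl⟩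
    · cases hp with
      | swap => exact .inl ⟨y, hy, x, hx, rfl⟩
      | left _ hp => exact .inr ⟨_, hx.tail hp, y, hy, rfl⟩
      | right _ hp => exact .inr ⟨x, hx, _, hy.tail hp, rfl⟩

theorem pivotClass_node {l r : BTree} (hl : l ≠ nil) (hr : r ≠ nil) :
    (node l r).pivotClass =
      Set.image2 node l.pivotClass r.pivotClass ∪ Set.image2 node r.pivotClass l.pivotClass := by
  refine (pivotClass_node_subset l r).antisymm (Set.union_subset ?_ ?_)
  · rintro _ ⟨x, hx, y, hy, rfl⟩
    exact hx.node hy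
  · rintro _ ⟨y, hy, x, hx, rfl⟩
    exact (hx.node hy).tail (.swap (hx.ne_nil hl) (hy.ne_nil hr))

theorem finite_pivotClass (s : BTree) : s.pivotClass.Finite := by
  induction s with
  | nil => simp [pivotClass_nil]
  | node l r ihl ihr =>
    exact ((ihl.image2 _ ihr).union (ihr.image2 _ ihl)).subset (pivotClass_node_subset l r)

def labellingCount : BTree → ℕ
  | nil => 1
  | node l r => (l.size + r.size).choose l.size * (l.labellingCount * r.labellingCount)

open Classical in
noncomputable def increasingLabellings : BTree → Finset ℕ → Finset LBTree
  | nil, A => if A = ∅ then {.nil} else ∅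
  | node l r, A =>
    if h : A.Nonempty then
      ((A.erase (A.min' h)).powersetCard l.size).biUnion fun B =>
        (l.increasingLabellings B ×ˢ r.increasingLabellings (A.erase (A.min' h) \ B)).image
          fun p => .node (A.min' h) p.1 p.2
    else ∅

theorem mem_increasingLabellings {s : BTree} {A : Finset ℕ} {t : LBTree} :
    t ∈ s.increasingLabellings A ↔ t.shape = s ∧ t.labels = A.val ∧ t.Increasing := by
  induction s generalizing A t with
  | nil =>
    cases t <;> by_cases hA : A = ∅ <;>
      simp [increasingLabellings, hA, LBTree.shape, LBTree.labels, LBTree.Increasing.nil,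
        @eq_comm (Multiset ℕ) 0]
  | node l r ihl ihr =>
    constructor
    · intro ht
      rw [increasingLabellings] at ht
      split_ifs at ht with hne
      · simp only [Finset.mem_biUnion, Finset.mem_image, Finset.mem_product,
          Finset.mem_powersetCard, ihl, ihr] at ht
        obtain ⟨B, ⟨hBE, -⟩, ⟨x, y⟩, ⟨⟨hxs, hxl, hx⟩, ⟨hys, hyl, hy⟩⟩, rfl⟩ := ht
        have hlt : ∀ b ∈ A.erase (A.min' hne), A.min' hne < b :=
          fun b => A.min'_lt_of_mem_erase_min' hne
        refine ⟨by simp [LBTree.shape, hxs, hys], ?_, .node ?_ ?_ hx hy⟩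
        · rw [LBTree.labels, hxl, hyl, Finset.sdiff_val,
            add_tsub_cancel_of_le (Finset.val_le_iff.mpr hBE), Finset.erase_val,
            Multiset.cons_erase (A.min'_mem hne)]
        · exact hxl ▸ fun b hb => hlt b (hBE hb)
        · exact hyl ▸ fun b hb => hlt b (Finset.sdiff_subset hb)
      · simp at ht
    · rintro ⟨hs, hlab, hinc⟩
      cases t with
      | nil => cases hs
      | node a x y =>
        simp only [LBTree.shape, node.injEq] at hs
        obtain ⟨hne, hmin, hE⟩ := hinc.root_eq_min' hlab
        cases hinc with | node _ _ hx hy => ?_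
        have hxE : x.labels ≤ (A.erase a).val := hE ▸ Multiset.le_add_right _ _
        let B : Finset ℕ := ⟨x.labels, Multiset.nodup_of_le hxE (A.erase a).nodup⟩
        rw [increasingLabellings, dif_pos hne, hmin]
        simp only [Finset.mem_biUnion, Finset.mem_image, Finset.mem_product,
          Finset.mem_powersetCard, ihl, ihr]
        refine ⟨B, ⟨Finset.val_le_iff.mp hxE, ?_⟩, (x, y), ⟨⟨hs.1, rfl, hx⟩, ⟨hs.2, ?_, hy⟩⟩, rfl⟩
        · rw [← hs.1, ← LBTree.card_labels]; rfl
        · rw [Finset.sdiff_val, hE]; exact (add_tsub_cancel_left _ _).symm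

theorem card_increasingLabellings {s : BTree} {A : Finset ℕ} (hA : A.card = s.size) :
    (s.increasingLabellings A).card = s.labellingCount := by
  induction s generalizing A with
  | nil => simp [Finset.card_eq_zero.mp hA, increasingLabellings, labellingCount]
  | node l r ihl ihr =>
    classical
    have hne : A.Nonempty := Finset.card_pos.mp (by rw [hA, size]; omega)
    rw [increasingLabellings, dif_pos hne]
    set m := A.min' hne
    have hE : (A.erase m).card = l.size + r.size := by
      rw [Finset.card_erase_of_mem (A.min'_mem hne), hA, size]; omega
    have hinj : Function.Injective fun p : LBTree × LBTree => LBTree.node m p.1 p.2 :=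
      fun p q h => by cases p; cases q; cases h; rfl
    rw [Finset.card_biUnion]
    · calc ∑ B ∈ (A.erase m).powersetCard l.size, _
          = ∑ B ∈ (A.erase m).powersetCard l.size, l.labellingCount * r.labellingCount := by
            refine Finset.sum_congr rfl fun B hB => ?_
            obtain ⟨hBE, hB⟩ := Finset.mem_powersetCard.mp hB
            rw [Finset.card_image_of_injective _ hinj, Finset.card_product, ihl hB,
              ihr (by rw [Finset.card_sdiff_of_subset hBE, hE, hB]; omega)]
        _ = (node l r).labellingCount := by
            rw [Finset.sum_const, Finset.card_powersetCard, hE, smul_eq_mul, labellingCount]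
    · intro B _ B' _ hBB'
      refine Finset.disjoint_left.mpr fun t ht ht' => hBB' ?_
      simp only [Finset.mem_image, Finset.mem_product] at ht ht'
      obtain ⟨⟨x, y⟩, ⟨hx, -⟩, rfl⟩ := ht
      obtain ⟨⟨x', y'⟩, ⟨hx', -⟩, h⟩ := ht'
      cases h
      exact Finset.val_injective ((mem_increasingLabellings.mp hx).2.1.symm.trans
        (mem_increasingLabellings.mp hx').2.1)

theorem lcount_eq_labellingCount (s : BTree) : lcount s = s.labellingCount := by
  have hA : ((Finset.range s.size).map (addRightEmbedding 1)).card = s.size := by simp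
  rw [← card_increasingLabellings hA, ← Set.ncard_coe_finset, lcount]
  congr
  ext t
  simp [mem_increasingLabellings]

theorem lcount_node (l r : BTree) :
    lcount (node l r) = (l.size + r.size).choose l.size * (lcount l * lcount r) := by
  simp only [lcount_eq_labellingCount, labellingCount]

theorem finsum_lcount_image2_node (l r : BTree) :
    ∑ᶠ t ∈ Set.image2 node l.pivotClass r.pivotClass, lcount t =
      (l.size + r.size).choose l.size * (Tbar l * Tbar r) := by
  have hnode : Function.Injective2 node := fun _ _ _ _ h => node.inj h
  rw [finsum_mem_image2 hnode (finite_pivotClass l) (finite_pivotClass r), Tbar, Tbar,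
    finsum_mem_mul, mul_finsum_mem]
  refine finsum_mem_congr rfl fun x hx => ?_
  rw [mul_finsum_mem, mul_finsum_mem]
  refine finsum_mem_congr rfl fun y hy => ?_
  rw [lcount_node, ← PivotEquiv.size_eq hx, ← PivotEquiv.size_eq hy]

open Classical in
theorem Tbar_node {l r : BTree} (hl : l ≠ nil) (hr : r ≠ nil) :
    Tbar (node l r) = (if l.PivotEquiv r then 1 else 2) *
      ((l.size + r.size).choose l.size * (Tbar l * Tbar r)) := by
  change ∑ᶠ t ∈ (node l r).pivotClass, lcount t = _
  rw [pivotClass_node hl hr]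
  split_ifs with h
  · rw [Set.union_eq_left.mpr (by rw [pivotClass_eq h]), finsum_lcount_image2_node, one_mul]
  · have hdisj : Disjoint (Set.image2 node l.pivotClass r.pivotClass)
        (Set.image2 node r.pivotClass l.pivotClass) := by
      refine Set.disjoint_left.mpr ?_
      rintro _ ⟨x, hx, y, hy, rfl⟩ ⟨y', hy', x', -, he⟩
      cases he
      exact h (PivotEquiv.trans hx (PivotEquiv.symm hy'))
    rw [finsum_mem_union hdisj ((finite_pivotClass l).image2 _ (finite_pivotClass r))
      ((finite_pivotClass r).image2 _ (finite_pivotClass l)), finsum_lcount_image2_node,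
      finsum_lcount_image2_node, add_comm r.size, ← Nat.choose_symm_add]
    ring

theorem Complete.odd_size {s : BTree} (hs : s.Complete) (hne : s ≠ .nil) : Odd s.size := by
  induction hs with
  | nil => exact absurd rfl hne
  | leaf => exact odd_one
  | node hl hr _ _ ihl ihr =>
    obtain ⟨a, ha⟩ := ihl hl
    obtain ⟨b, hb⟩ := ihr hr
    exact ⟨a + b + 1, by rw [size, ha, hb]; ring⟩

theorem Complete.two_pow_size_dvd {s : BTree} (hs : s.Complete) :
    2 ^ s.size ∣ (s.size + 1) * Tbar s := by
  induction hs with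
  | nil => simp [size]
  | leaf => exact dvd_mul_right 2 _
  | @node l r hl hr hcl hcr ihl ihr =>
    classical
    set p := l.size
    set q := r.size
    have hodd : Odd (BTree.node l r).size := (Complete.node hl hr hcl hcr).odd_size (by simp)
    have hcop : Nat.Coprime (2 ^ (BTree.node l r).size) (BTree.node l r).size :=
      Nat.Coprime.pow_left _ (Nat.coprime_two_left.mpr hodd)
    set k := if l.PivotEquiv r then 1 else 2
    have hk : 2 ∣ k * (p + q + 2).choose (p + 1) := by
      by_cases h : l.PivotEquiv r
      · rw [show q = p from h.size_eq.symm, show k = 1 from if_pos h, one_mul, ← two_mul,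
          ← mul_add_one]
        exact Nat.two_dvd_centralBinom_succ p
      · rw [show k = 2 from if_neg h]
        exact dvd_mul_right 2 _
    refine hcop.dvd_of_dvd_mul_left ?_
    calc 2 ^ (BTree.node l r).size = 2 * 2 ^ p * 2 ^ q := by rw [size, pow_add, pow_add, pow_one]
      _ ∣ k * (p + q + 2).choose (p + 1) * ((p + 1) * Tbar l) * ((q + 1) * Tbar r) :=
        mul_dvd_mul (mul_dvd_mul hk ihl) ihr
      _ = (BTree.node l r).size * (((BTree.node l r).size + 1) * Tbar (BTree.node l r)) := by
        rw [Tbar_node hl hr, size, show 1 + p + q = p + q + 1 by ring,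
          show p + q + 1 + 1 = p + q + 2 by ring]
        linear_combination (k * Tbar l * Tbar r) * Nat.add_one_mul_add_one_mul_choose p q

end BTree

/-- For every pivoting-equivalence class `s̄` of complete binary trees with `2n+1`
vertices, `(n+1) * T(s̄)` is divisible by `2 ^ (2n)`. -/
theorem genocchi_class_divisibility (n : ℕ) (s : BTree)
    (hs : s.Complete) (hsize : s.size = 2 * n + 1) :
    2 ^ (2 * n) ∣ (n + 1) * Tbar s := by
  have h := hs.two_pow_size_dvd
  rw [hsize, pow_succ, show 2 * n + 1 + 1 = (n + 1) * 2 by ring, mul_right_comm] at h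
  exact Nat.dvd_of_mul_dvd_mul_right two_pos h
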